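/- Let F_A, F_G ⊆ Q be singleton winning conditions over a two-player game graph H. Then the complement Q∖⟦φ₄⟧ of the value of the 4-nested fixed point φ₄ equals the value of the simplified fixed point μZ̄.νȲ.μX̄.νW̄. Pre⁰(Z̄) ∪ ((Q∖F_G) ∩ F_A ∩ Pre⁰(Ȳ)) ∪ ((Q∖F_G) ∩ Precondᶜ(W̄, X̄ ∪ F_A)); equivalently, the negation μZ̄.νȲ.μX̄.νW̄. ((Q∖F_G) ∪ Pre⁰(Z̄)) ∩ Pre⁰(Ȳ) ∩ (F_A ∪ Precondᶜ(W̄, X̄ ∪ F_A)) of φ₄ simplifies to this form. -/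
import Mathlib


namespace GR1

/-- A two-player game graph `H = ⟨Q⁰, Q¹, δ⁰, δ¹, q₀⟩`.  `env` is the set `Q⁰` of
environment states, `sys` the set `Q¹` of system states, and `delta` combines the
transition functions `δ⁰` and `δ¹`. -/
structure GameGraph (Q : Type*) where
  env : Set Q
  sys : Set Q
  delta : Q → Set Q
  disjoint_env_sys : Disjoint env sys
  union_env_sys : env ∪ sys = Set.univ
  delta_env : ∀ q ∈ env, delta q ⊆ sys
  delta_sys : ∀ q ∈ sys, delta q ⊆ env
  delta_nonempty : ∀ q, (delta q).Nonempty
  init : Q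
  init_env : init ∈ env

namespace GameGraph

/-- The existential predecessor operator `Pre∃`. -/
def PreE {Q : Type*} (G : GameGraph Q) (P : Set Q) : Set Q :=
  {q | (G.delta q ∩ P).Nonempty}

/-- The universal predecessor operator `Pre∀`. -/
def PreA {Q : Type*} (G : GameGraph Q) (P : Set Q) : Set Q :=
  {q | G.delta q ⊆ P}

/-- The player-0 (environment) controllable predecessor operator `Pre⁰`. -/
def Pre0 {Q : Type*} (G : GameGraph Q) (P : Set Q) : Set Q :=
  {q | q ∈ G.env ∧ (G.delta q ∩ P).Nonempty} ∪ {q | q ∈ G.sys ∧ G.delta q ⊆ P}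

/-- The player-1 (system) controllable predecessor operator `Pre¹`. -/
def Pre1 {Q : Type*} (G : GameGraph Q) (P : Set Q) : Set Q :=
  {q | q ∈ G.env ∧ G.delta q ⊆ P} ∪ {q | q ∈ G.sys ∧ (G.delta q ∩ P).Nonempty}

/-- The conditional predecessor `Precond(P,P') = Pre∃(P) ∩ Pre¹(P ∪ P')`. -/
def Precond {Q : Type*} (G : GameGraph Q) (P P' : Set Q) : Set Q :=
  G.PreE P ∩ G.Pre1 (P ∪ P')

/-- The dual conditional predecessor `Precondᶜ(P,P') = Pre∀(P) ∪ Pre⁰(P ∩ P')`. -/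
def PrecondC {Q : Type*} (G : GameGraph Q) (P P' : Set Q) : Set Q :=
  G.PreA P ∪ G.Pre0 (P ∩ P')

end GameGraph

/-- Knaster–Tarski least fixed point over the powerset lattice. -/
def lfpSet {Q : Type*} (F : Set Q → Set Q) : Set Q := ⋂₀ {S | F S ⊆ S}

/-- Knaster–Tarski greatest fixed point over the powerset lattice. -/
def gfpSet {Q : Type*} (F : Set Q → Set Q) : Set Q := ⋃₀ {S | S ⊆ F S}

/-- Knaster–Tarski least fixed point over the lattice of vectors of sets. -/
def lfpVec {Q : Type*} {n : ℕ} (F : (Fin n → Set Q) → (Fin n → Set Q)) : Fin n → Set Q :=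
  fun a => ⋂ V ∈ {V : Fin n → Set Q | ∀ a', F V a' ⊆ V a'}, V a

/-- Knaster–Tarski greatest fixed point over the lattice of vectors of sets. -/
def gfpVec {Q : Type*} {n : ℕ} (F : (Fin n → Set Q) → (Fin n → Set Q)) : Fin n → Set Q :=
  fun a => ⋃ V ∈ {V : Fin n → Set Q | ∀ a', V a' ⊆ F V a'}, V a

/-- Cyclic successor of a mode: `a⁺ = (a mod n) + 1` in 1-based counting. -/
def modeSucc {n : ℕ} (a : Fin n) : Fin n :=
  ⟨(a.val + 1) % n, Nat.mod_lt _ a.pos⟩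

/-- `π` is an (infinite) play over `G` starting in the state `q`. -/
def IsPlayFrom {Q : Type*} (G : GameGraph Q) (q : Q) (π : ℕ → Q) : Prop :=
  π 0 = q ∧ ∀ k, π (k + 1) ∈ G.delta (π k)

/-- `Inf(π) ∩ F ≠ ∅` : the play `π` visits the set `F` infinitely often. -/
def InfOft {Q : Type*} (π : ℕ → Q) (F : Set Q) : Prop := ∀ n, ∃ k, n ≤ k ∧ π k ∈ F

/-- `L_q(H,F)` : plays from `q` satisfying the Büchi condition `F`. -/
def LBuchi {Q : Type*} (G : GameGraph Q) (q : Q) (F : Set Q) : Set (ℕ → Q) :=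
  {π | IsPlayFrom G q π ∧ InfOft π F}

/-- `L_q(H,𝓕)` : plays from `q` satisfying the generalized Büchi condition `𝓕`. -/
def LGenBuchi {Q ι : Type*} (G : GameGraph Q) (q : Q) (F : ι → Set Q) : Set (ℕ → Q) :=
  {π | IsPlayFrom G q π ∧ ∀ i, InfOft π (F i)}

/-- `Pre(L)` : the set of all finite prefixes of the (infinite) words in `L`. -/
def prefixes {Q : Type*} (L : Set (ℕ → Q)) : Set (List Q) :=
  {w | ∃ π ∈ L, ∃ k, w = (List.range k).map π}

/-- A (history dependent) system strategy: on a history ending in a system state it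
produces a `δ¹`-successor of that state. -/
def IsSysStrategy {Q : Type*} (G : GameGraph Q) (f : List Q → Q) : Prop :=
  ∀ (w : List Q) (q : Q), q ∈ G.sys → f (w ++ [q]) ∈ G.delta q

/-- The finite history `π|_{[0,k]}` of a play. -/
def histUpTo {Q : Type*} (π : ℕ → Q) (k : ℕ) : List Q := (List.range (k + 1)).map π

/-- `L_q(H,f¹)` : plays from `q` compliant with the system strategy `f¹`. -/
def Lstrat {Q : Type*} (G : GameGraph Q) (q : Q) (f : List Q → Q) : Set (ℕ → Q) :=
  {π | IsPlayFrom G q π ∧ ∀ k, π k ∈ G.sys → π (k + 1) = f (histUpTo π k)}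

/-- `L_q(H,f¹)` for a memoryless system strategy `f¹ : Q → Q`. -/
def Lmem {Q : Type*} (G : GameGraph Q) (q : Q) (f : Q → Q) : Set (ℕ → Q) :=
  {π | IsPlayFrom G q π ∧ ∀ k, π k ∈ G.sys → π (k + 1) = f (π k)}

/-- Strict lexicographic order on ranks. -/
def rankLt (p r : ℕ × ℕ) : Prop := p.1 < r.1 ∨ (p.1 = r.1 ∧ p.2 < r.2)

/-- Lexicographic order on ranks. -/
def rankLe (p r : ℕ × ℕ) : Prop := p.1 < r.1 ∨ (p.1 = r.1 ∧ p.2 ≤ r.2)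

/-! ### The 4-nested fixed point `φ₄` for singleton winning conditions -/

/-- The body `(F_G ∩ Pre¹(Z)) ∪ Pre¹(Y) ∪ ((Q∖F_A) ∩ Precond(W, X∖F_A))`. -/
def body {Q : Type*} (G : GameGraph Q) (FA FG Z Y X W : Set Q) : Set Q :=
  (FG ∩ G.Pre1 Z) ∪ G.Pre1 Y ∪ (FAᶜ ∩ G.Precond W (X \ FA))

def innerW {Q : Type*} (G : GameGraph Q) (FA FG Z Y X : Set Q) : Set Q :=
  lfpSet (fun W => body G FA FG Z Y X W)

def innerX {Q : Type*} (G : GameGraph Q) (FA FG Z Y : Set Q) : Set Q :=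
  gfpSet (fun X => innerW G FA FG Z Y X)

def innerY {Q : Type*} (G : GameGraph Q) (FA FG Z : Set Q) : Set Q :=
  lfpSet (fun Y => innerX G FA FG Z Y)

/-- `⟦φ₄⟧ = Z^∞` : the value of `νZ.μY.νX.μW. (F_G ∩ Pre¹(Z)) ∪ Pre¹(Y) ∪
((Q∖F_A) ∩ Precond(W, X∖F_A))`. -/
def phi4 {Q : Type*} (G : GameGraph Q) (FA FG : Set Q) : Set Q :=
  gfpSet (fun Z => innerY G FA FG Z)

/-- The approximants `Yⁱ` of `Y` in the terminal iteration over `Z` (`Y⁰ = ∅`). -/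
def Yapprox {Q : Type*} (G : GameGraph Q) (FA FG : Set Q) : ℕ → Set Q
  | 0 => ∅
  | i + 1 => innerX G FA FG (phi4 G FA FG) (Yapprox G FA FG i)

/-- The approximants `Wⁱ_j` of `W` computed with `X = Xⁱ = Yⁱ` and `Y = Yⁱ⁻¹`. -/
def Wapprox {Q : Type*} (G : GameGraph Q) (FA FG : Set Q) (i : ℕ) : ℕ → Set Q
  | 0 => ∅
  | j + 1 =>
      body G FA FG (phi4 G FA FG) (Yapprox G FA FG (i - 1)) (Yapprox G FA FG i)
        (Wapprox G FA FG i j)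

/-- `rank(q) = (i,j)` iff `q ∈ (Yⁱ∖Yⁱ⁻¹) ∩ (Wⁱ_j∖Wⁱ_{j−1})` with `i,j > 0`. -/
def hasRank {Q : Type*} (G : GameGraph Q) (FA FG : Set Q) (q : Q) (i j : ℕ) : Prop :=
  0 < i ∧ 0 < j ∧
    q ∈ (Yapprox G FA FG i \ Yapprox G FA FG (i - 1)) ∩
        (Wapprox G FA FG i j \ Wapprox G FA FG i (j - 1))

/-- The memoryless system strategy extracted from the ranking: `f¹(q) ∈ δ¹(q)`,
`rank(f¹(q)) < rank(q)` whenever `rank(q) > (1,1)`, and `f¹(q) ∈ Z^∞` otherwise. -/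
def GoodStrategy {Q : Type*} (G : GameGraph Q) (FA FG : Set Q) (f : Q → Q) : Prop :=
  ∀ q, q ∈ G.sys → q ∈ phi4 G FA FG →
    f q ∈ G.delta q ∧
      ∀ i j, hasRank G FA FG q i j →
        (((i, j) = ((1 : ℕ), (1 : ℕ)) → f q ∈ phi4 G FA FG) ∧
          ((i, j) ≠ ((1 : ℕ), (1 : ℕ)) →
            ∃ i' j', hasRank G FA FG (f q) i' j' ∧ rankLt (i', j') (i, j)))

/-! ### The negated fixed point `φ̄₄` (singleton conditions) -/

/-- The simplified negated body
`Pre⁰(Z̄) ∪ ((Q∖F_G) ∩ F_A ∩ Pre⁰(Ȳ)) ∪ ((Q∖F_G) ∩ Precondᶜ(W̄, X̄ ∪ F_A))`. -/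
def nbody {Q : Type*} (G : GameGraph Q) (FA FG Z Y X W : Set Q) : Set Q :=
  G.Pre0 Z ∪ (FGᶜ ∩ FA ∩ G.Pre0 Y) ∪ (FGᶜ ∩ G.PrecondC W (X ∪ FA))

/-- The simplified negated fixed point `φ̄₄ = μZ̄.νȲ.μX̄.νW̄. nbody`. -/
def phi4neg {Q : Type*} (G : GameGraph Q) (FA FG : Set Q) : Set Q :=
  lfpSet (fun Z => gfpSet (fun Y => lfpSet (fun X => gfpSet (fun W =>
    nbody G FA FG Z Y X W))))

/-- The unsimplified negation body
`((Q∖F_G) ∪ Pre⁰(Z̄)) ∩ Pre⁰(Ȳ) ∩ (F_A ∪ Precondᶜ(W̄, X̄ ∪ F_A))`. -/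
def nbodyRaw {Q : Type*} (G : GameGraph Q) (FA FG Z Y X W : Set Q) : Set Q :=
  (FGᶜ ∪ G.Pre0 Z) ∩ G.Pre0 Y ∩ (FA ∪ G.PrecondC W (X ∪ FA))

/-- The unsimplified negated fixed point. -/
def phi4negRaw {Q : Type*} (G : GameGraph Q) (FA FG : Set Q) : Set Q :=
  lfpSet (fun Z => gfpSet (fun Y => lfpSet (fun X => gfpSet (fun W =>
    nbodyRaw G FA FG Z Y X W))))

/-- The approximants `Z̄ⁱ` of the negated fixed point (`Z̄⁰ = ∅`). -/
def Zbar {Q : Type*} (G : GameGraph Q) (FA FG : Set Q) : ℕ → Set Q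
  | 0 => ∅
  | i + 1 =>
      gfpSet (fun Y => lfpSet (fun X => gfpSet (fun W =>
        nbody G FA FG (Zbar G FA FG i) Y X W)))

/-- The approximants `X̄ⁱ_j` of `X̄` computed while computing `Z̄ⁱ` (using `Ȳ = Z̄ⁱ` and
`Z̄ = Z̄ⁱ⁻¹`), with `X̄ⁱ₀ = ∅`. -/
def Xbar {Q : Type*} (G : GameGraph Q) (FA FG : Set Q) (i : ℕ) : ℕ → Set Q
  | 0 => ∅
  | j + 1 =>
      gfpSet (fun W =>
        nbody G FA FG (Zbar G FA FG (i - 1)) (Zbar G FA FG i) (Xbar G FA FG i j) W)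

/-- The negated rank: `rank(q) = (i,j)` iff `q ∈ X̄ⁱ_j ∖ X̄ⁱ_{j−1}` with `i,j > 0`. -/
def nrank {Q : Type*} (G : GameGraph Q) (FA FG : Set Q) (q : Q) (i j : ℕ) : Prop :=
  0 < i ∧ 0 < j ∧ q ∈ Xbar G FA FG i j \ Xbar G FA FG i (j - 1)

/-- Environment moves permitted during the inductive construction of the reachable
region `R_{f¹}` (cases (a'), (b'), (c'2), (c'3) and the remaining case (c'1)). -/
def envStep {Q : Type*} (G : GameGraph Q) (FA FG : Set Q) (q' q'' : Q) : Prop :=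
  q'' ∈ G.delta q' ∧
    ∃ i j, nrank G FA FG q' i j ∧
      ((q'' ∈ (phi4 G FA FG)ᶜ ∧ ∃ i' j', nrank G FA FG q'' i' j' ∧ i' ≤ i - 1) ∨
       (q' ∈ FA \ FG ∧ q'' ∈ (phi4 G FA FG)ᶜ ∧
          ∃ i' j', nrank G FA FG q'' i' j' ∧ i' ≤ i) ∨
       (q'' ∈ (phi4 G FA FG)ᶜ ∧
          ∃ i' j', nrank G FA FG q'' i' j' ∧ rankLe (i', j') (i, j - 1)) ∨
       (q'' ∈ (phi4 G FA FG)ᶜ ∧ q'' ∈ FA ∧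
          ∃ i' j', nrank G FA FG q'' i' j' ∧ rankLe (i', j') (i, j)) ∨
       (∀ p ∈ G.delta q', p ∈ (phi4 G FA FG)ᶜ ∧
          ∃ i' j', nrank G FA FG p i' j' ∧ rankLe (i', j') (i, j)))

/-- `L_q(H,f¹,R_{f¹})` : plays from `q` compliant with `f¹` that remain within the
reachable region `R_{f¹}`, i.e. in which every environment move follows the rules of
the inductive construction of `R_{f¹}`. -/
def Lrestr {Q : Type*} (G : GameGraph Q) (FA FG : Set Q) (q : Q) (f : List Q → Q) :
    Set (ℕ → Q) :=
  {π | π ∈ Lstrat G q f ∧ ∀ k, π k ∈ G.env → envStep G FA FG (π k) (π (k + 1))}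

/-! ### The vectorized fixed point `φ₄ᵛ` for general GR(1) conditions -/

/-- The body `Ω^{ab}` of the vectorized fixed point. -/
def bodyV {Q : Type*} {n m : ℕ} (G : GameGraph Q) (FAv : Fin m → Set Q)
    (FGv : Fin n → Set Q) (Zv : Fin n → Set Q) (a : Fin n) (b : Fin m)
    (Y X W : Set Q) : Set Q :=
  (FGv a ∩ G.Pre1 (Zv (modeSucc a))) ∪ G.Pre1 Y ∪ ((FAv b)ᶜ ∩ G.Precond W (X \ FAv b))

def innerWV {Q : Type*} {n m : ℕ} (G : GameGraph Q) (FAv : Fin m → Set Q)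
    (FGv : Fin n → Set Q) (Zv : Fin n → Set Q) (a : Fin n) (b : Fin m)
    (Y X : Set Q) : Set Q :=
  lfpSet (fun W => bodyV G FAv FGv Zv a b Y X W)

def innerXV {Q : Type*} {n m : ℕ} (G : GameGraph Q) (FAv : Fin m → Set Q)
    (FGv : Fin n → Set Q) (Zv : Fin n → Set Q) (a : Fin n) (b : Fin m)
    (Y : Set Q) : Set Q :=
  gfpSet (fun X => innerWV G FAv FGv Zv a b Y X)

/-- The vector `[Z¹,…,Zⁿ]` of the vectorized fixed point `φ₄ᵛ`. -/
def phi4v {Q : Type*} {n m : ℕ} (G : GameGraph Q) (FAv : Fin m → Set Q)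
    (FGv : Fin n → Set Q) : Fin n → Set Q :=
  gfpVec (fun Zv a => lfpSet (fun Y => ⋃ b, innerXV G FAv FGv Zv a b Y))

/-- `⟦φ₄ᵛ⟧ = Z^∞ = ⋃_a Zᵃ^∞`. -/
def phi4vSem {Q : Type*} {n m : ℕ} (G : GameGraph Q) (FAv : Fin m → Set Q)
    (FGv : Fin n → Set Q) : Set Q :=
  ⋃ a, phi4v G FAv FGv a

/-- The approximants `ᵃYⁱ` (with `ᵃY⁰ = ∅`) of `Yᵃ` in the terminal iteration. -/
def YapproxV {Q : Type*} {n m : ℕ} (G : GameGraph Q) (FAv : Fin m → Set Q)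
    (FGv : Fin n → Set Q) (a : Fin n) : ℕ → Set Q
  | 0 => ∅
  | i + 1 => ⋃ b, innerXV G FAv FGv (phi4v G FAv FGv) a b (YapproxV G FAv FGv a i)

/-- The fixed point `ᵃᵇXⁱ` of `X^{ab}` computed during the `i`-th iteration. -/
def XfixV {Q : Type*} {n m : ℕ} (G : GameGraph Q) (FAv : Fin m → Set Q)
    (FGv : Fin n → Set Q) (a : Fin n) (b : Fin m) (i : ℕ) : Set Q :=
  innerXV G FAv FGv (phi4v G FAv FGv) a b (YapproxV G FAv FGv a (i - 1))

/-- The approximants `ᵃᵇWⁱ_j` of `W^{ab}` computed while computing `ᵃYⁱ`. -/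
def WapproxV {Q : Type*} {n m : ℕ} (G : GameGraph Q) (FAv : Fin m → Set Q)
    (FGv : Fin n → Set Q) (a : Fin n) (b : Fin m) (i : ℕ) : ℕ → Set Q
  | 0 => ∅
  | j + 1 =>
      bodyV G FAv FGv (phi4v G FAv FGv) a b (YapproxV G FAv FGv a (i - 1))
        (XfixV G FAv FGv a b i) (WapproxV G FAv FGv a b i j)

/-- The mode-based rank: `ᵃᵇrank(q) = (i,j)` iff
`q ∈ (ᵃYⁱ∖ᵃYⁱ⁻¹) ∩ (ᵃᵇWⁱ_j∖ᵃᵇWⁱ_{j−1})` with `i,j > 0`. -/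
def hasRankV {Q : Type*} {n m : ℕ} (G : GameGraph Q) (FAv : Fin m → Set Q)
    (FGv : Fin n → Set Q) (a : Fin n) (b : Fin m) (q : Q) (i j : ℕ) : Prop :=
  0 < i ∧ 0 < j ∧
    q ∈ (YapproxV G FAv FGv a i \ YapproxV G FAv FGv a (i - 1)) ∩
        (WapproxV G FAv FGv a b i j \ WapproxV G FAv FGv a b i (j - 1))

/-- The finite-memory system strategy extracted from the mode-based ranking. -/
def GoodStrategyV {Q : Type*} {n m : ℕ} (G : GameGraph Q) (FAv : Fin m → Set Q)
    (FGv : Fin n → Set Q) (f : Q × Fin n × Fin m → Q × Fin n × Fin m) : Prop :=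
  ∀ (q : Q) (a : Fin n) (b : Fin m), q ∈ G.sys → q ∈ phi4v G FAv FGv a →
    (f (q, a, b)).1 ∈ G.delta q ∧
      ∀ i j, hasRankV G FAv FGv a b q i j →
        (((i, j) = ((1 : ℕ), (1 : ℕ)) →
            (f (q, a, b)).1 ∈ phi4v G FAv FGv (modeSucc a) ∧
              (f (q, a, b)).2.1 = modeSucc a) ∧
          (1 < i ∧ j = 1 →
            (f (q, a, b)).2.1 = a ∧
              ∃ i' j',
                hasRankV G FAv FGv a ((f (q, a, b)).2.2) ((f (q, a, b)).1) i' j' ∧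
                  i' ≤ i - 1) ∧
          (1 < j →
            (f (q, a, b)).2.1 = a ∧ (f (q, a, b)).2.2 = b ∧
              ∃ i' j',
                hasRankV G FAv FGv a b ((f (q, a, b)).1) i' j' ∧
                  rankLe (i', j') (i, j - 1)))

/-- Compliance of a play with a finite-memory strategy via mode traces `α`, `β`. -/
def CompliantModeV {Q : Type*} {n m : ℕ} (G : GameGraph Q) (FAv : Fin m → Set Q)
    (FGv : Fin n → Set Q) (f : Q × Fin n × Fin m → Q × Fin n × Fin m)
    (π : ℕ → Q) (α : ℕ → Fin n) (β : ℕ → Fin m) : Prop :=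
  ∀ k,
    (π k ∈ G.sys → (π (k + 1), α (k + 1), β (k + 1)) = f (π k, α k, β k)) ∧
      (π k ∈ G.env →
        (hasRankV G FAv FGv (α k) (β k) (π (k + 1)) 1 1 →
            α (k + 1) = modeSucc (α k)) ∧
          ((∃ i, 1 < i ∧ hasRankV G FAv FGv (α k) (β k) (π (k + 1)) i 1) →
            α (k + 1) = α k) ∧
          ((∃ i j, 1 < j ∧ hasRankV G FAv FGv (α k) (β k) (π (k + 1)) i j) →
            α (k + 1) = α k ∧ β (k + 1) = β k))

/-- `L_q(H,f¹)` for a finite-memory strategy: plays from `q` compliant with `f¹`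
for some mode traces. -/
def LmodeV {Q : Type*} {n m : ℕ} (G : GameGraph Q) (FAv : Fin m → Set Q)
    (FGv : Fin n → Set Q) (q : Q) (f : Q × Fin n × Fin m → Q × Fin n × Fin m) :
    Set (ℕ → Q) :=
  {π | IsPlayFrom G q π ∧ ∃ α β, CompliantModeV G FAv FGv f π α β}

/-- `ᵃD = F_Gᵃ ∩ Pre¹(Z^{a⁺,∞})`. -/
def DsetV {Q : Type*} {n m : ℕ} (G : GameGraph Q) (FAv : Fin m → Set Q)
    (FGv : Fin n → Set Q) (a : Fin n) : Set Q :=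
  FGv a ∩ G.Pre1 (phi4v G FAv FGv (modeSucc a))

/-- `ᵃEⁱ = Pre¹(ᵃYⁱ⁻¹) ∖ ᵃYⁱ⁻¹`. -/
def EsetV {Q : Type*} {n m : ℕ} (G : GameGraph Q) (FAv : Fin m → Set Q)
    (FGv : Fin n → Set Q) (a : Fin n) (i : ℕ) : Set Q :=
  G.Pre1 (YapproxV G FAv FGv a (i - 1)) \ YapproxV G FAv FGv a (i - 1)

/-- `ᵃᵇΘⁱ_j = (Q∖F_Aᵇ) ∩ Precond(ᵃᵇWⁱ_{j−1}, ᵃᵇXⁱ∖F_Aᵇ)`. -/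
def ThetaV {Q : Type*} {n m : ℕ} (G : GameGraph Q) (FAv : Fin m → Set Q)
    (FGv : Fin n → Set Q) (a : Fin n) (b : Fin m) (i j : ℕ) : Set Q :=
  (FAv b)ᶜ ∩ G.Precond (WapproxV G FAv FGv a b i (j - 1)) (XfixV G FAv FGv a b i \ FAv b)

/-- `ᵃᵇRⁱ_j = ᵃᵇΘⁱ_j ∖ (ᵃᵇWⁱ_{j−1} ∪ ᵃYⁱ⁻¹ ∪ ᵃEⁱ ∪ ᵃD)`. -/
def RsetV {Q : Type*} {n m : ℕ} (G : GameGraph Q) (FAv : Fin m → Set Q)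
    (FGv : Fin n → Set Q) (a : Fin n) (b : Fin m) (i j : ℕ) : Set Q :=
  ThetaV G FAv FGv a b i j \
    (WapproxV G FAv FGv a b i (j - 1) ∪ YapproxV G FAv FGv a (i - 1) ∪
      EsetV G FAv FGv a i ∪ DsetV G FAv FGv a)

/-! ### The negated vectorized fixed point -/

/-- The body of the negated vectorized fixed point. -/
def nbodyV {Q : Type*} {n m : ℕ} (G : GameGraph Q) (FAv : Fin m → Set Q)
    (FGv : Fin n → Set Q) (Zv : Fin n → Set Q) (a : Fin n) (b : Fin m)
    (Y X W : Set Q) : Set Q :=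
  G.Pre0 (Zv (modeSucc a)) ∪ ((FGv a)ᶜ ∩ FAv b ∩ G.Pre0 Y) ∪
    ((FGv a)ᶜ ∩ G.PrecondC W (X ∪ FAv b))

/-- The coordinated approximants `Z̄ᵃⁱ` of the negated vectorized fixed point. -/
def ZbarV {Q : Type*} {n m : ℕ} (G : GameGraph Q) (FAv : Fin m → Set Q)
    (FGv : Fin n → Set Q) : ℕ → Fin n → Set Q
  | 0 => fun _ => ∅
  | i + 1 => fun a =>
      gfpSet (fun Y => ⋂ b, lfpSet (fun X => gfpSet (fun W =>
        nbodyV G FAv FGv (ZbarV G FAv FGv i) a b Y X W)))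

/-- The approximants `X̄^{ab,i}_j` of `X̄^{ab}` computed during the `i`-th iteration. -/
def XbarV {Q : Type*} {n m : ℕ} (G : GameGraph Q) (FAv : Fin m → Set Q)
    (FGv : Fin n → Set Q) (a : Fin n) (b : Fin m) (i : ℕ) : ℕ → Set Q
  | 0 => ∅
  | j + 1 =>
      gfpSet (fun W =>
        nbodyV G FAv FGv (ZbarV G FAv FGv (i - 1)) a b (ZbarV G FAv FGv i a)
          (XbarV G FAv FGv a b i j) W)

/-- The negated mode-based rank: `ᵃᵇrank(q) = (i,j)` iff `q ∈ X̄^{ab,i}_j∖X̄^{ab,i}_{j−1}`. -/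
def nrankV {Q : Type*} {n m : ℕ} (G : GameGraph Q) (FAv : Fin m → Set Q)
    (FGv : Fin n → Set Q) (a : Fin n) (b : Fin m) (q : Q) (i j : ℕ) : Prop :=
  0 < i ∧ 0 < j ∧ q ∈ XbarV G FAv FGv a b i j \ XbarV G FAv FGv a b i (j - 1)

/-- Environment moves permitted during the inductive construction of `R_{f¹}`
in the vectorized setting. -/
def envStepV {Q : Type*} {n m : ℕ} (G : GameGraph Q) (FAv : Fin m → Set Q)
    (FGv : Fin n → Set Q) (q' q'' : Q) : Prop :=
  q'' ∈ G.delta q' ∧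
    ∃ (a : Fin n) (b : Fin m) (i j : ℕ), nrankV G FAv FGv a b q' i j ∧
      ((q'' ∈ (phi4vSem G FAv FGv)ᶜ ∧
          ∃ b' i' j', nrankV G FAv FGv (modeSucc a) b' q'' i' j' ∧ i' ≤ i - 1) ∨
       (q' ∈ FAv b \ FGv a ∧ q'' ∈ (phi4vSem G FAv FGv)ᶜ ∧
          ∃ b' i' j', nrankV G FAv FGv a b' q'' i' j' ∧ i' ≤ i) ∨
       (q'' ∈ (phi4vSem G FAv FGv)ᶜ ∧
          ∃ i' j', nrankV G FAv FGv a b q'' i' j' ∧ rankLe (i', j') (i, j - 1)) ∨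
       (q'' ∈ (phi4vSem G FAv FGv)ᶜ ∧ q'' ∈ FAv b ∧
          ∃ i' j', nrankV G FAv FGv a b q'' i' j' ∧ rankLe (i', j') (i, j)) ∨
       (∀ p ∈ G.delta q', p ∈ (phi4vSem G FAv FGv)ᶜ ∧
          ∃ i' j', nrankV G FAv FGv a b p i' j' ∧ rankLe (i', j') (i, j)))

/-- `L_q(H,f¹,R_{f¹})` in the vectorized setting. -/
def LrestrV {Q : Type*} {n m : ℕ} (G : GameGraph Q) (FAv : Fin m → Set Q)
    (FGv : Fin n → Set Q) (q : Q) (f : List Q → Q) : Set (ℕ → Q) :=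
  {π | π ∈ Lstrat G q f ∧ ∀ k, π k ∈ G.env → envStepV G FAv FGv (π k) (π (k + 1))}
/-! ### Auxiliary lattice-theoretic lemmas -/

section Aux

variable {Q : Type*}

lemma lfpSet_le {F : Set Q → Set Q} {S : Set Q} (h : F S ⊆ S) :
    lfpSet F ⊆ S := Set.sInter_subset_of_mem h

lemma le_gfpSet {F : Set Q → Set Q} {S : Set Q} (h : S ⊆ F S) :
    S ⊆ gfpSet F := Set.subset_sUnion_of_mem h

lemma lfpSet_mono {F F' : Set Q → Set Q} (h : ∀ S, F S ⊆ F' S) :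
    lfpSet F ⊆ lfpSet F' :=
  Set.sInter_subset_sInter fun S hS => (h S).trans hS

lemma gfpSet_mono {F F' : Set Q → Set Q} (h : ∀ S, F S ⊆ F' S) :
    gfpSet F ⊆ gfpSet F' :=
  Set.sUnion_subset_sUnion fun S hS => hS.trans (h S)

lemma lfpSet_congr {F F' : Set Q → Set Q} (h : ∀ S, F S = F' S) :
    lfpSet F = lfpSet F' :=
  subset_antisymm (lfpSet_mono fun S => (h S).le) (lfpSet_mono fun S => (h S).ge)

lemma gfpSet_congr {F F' : Set Q → Set Q} (h : ∀ S, F S = F' S) :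
    gfpSet F = gfpSet F' :=
  subset_antisymm (gfpSet_mono fun S => (h S).le) (gfpSet_mono fun S => (h S).ge)

lemma lfpSet_fixed {F : Set Q → Set Q} (hF : Monotone F) :
    F (lfpSet F) = lfpSet F := by
  have h1 : F (lfpSet F) ⊆ lfpSet F := by
    intro x hx
    apply Set.mem_sInter.2
    intro S hS
    exact hS (hF (lfpSet_le hS) hx)
  exact subset_antisymm h1 (lfpSet_le (hF h1))

lemma gfpSet_fixed {F : Set Q → Set Q} (hF : Monotone F) :
    gfpSet F = F (gfpSet F) := by
  have h1 : gfpSet F ⊆ F (gfpSet F) := by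
    rintro x ⟨S, hS, hxS⟩
    exact hF (le_gfpSet hS) (hS hxS)
  exact subset_antisymm h1 (le_gfpSet (hF h1))

lemma compl_lfpSet (F : Set Q → Set Q) :
    (lfpSet F)ᶜ = gfpSet (fun S => (F Sᶜ)ᶜ) := by
  ext x
  simp only [gfpSet, lfpSet, Set.mem_compl_iff, Set.mem_sUnion, Set.mem_sInter,
    Set.mem_setOf_eq, not_forall]
  constructor
  · rintro ⟨S, hS, hx⟩
    refine ⟨Sᶜ, ?_, hx⟩
    rw [compl_compl]
    exact Set.compl_subset_compl.mpr hS
  · rintro ⟨S, hS, hx⟩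
    refine ⟨Sᶜ, Set.subset_compl_comm.mp hS, by simpa using hx⟩

lemma compl_gfpSet (F : Set Q → Set Q) :
    (gfpSet F)ᶜ = lfpSet (fun S => (F Sᶜ)ᶜ) := by
  ext x
  simp only [gfpSet, lfpSet, Set.mem_compl_iff, Set.mem_sUnion, Set.mem_sInter,
    Set.mem_setOf_eq, not_exists, not_and]
  constructor
  · intro h T hT
    by_contra hx
    exact h Tᶜ (Set.compl_subset_comm.mp hT) hx
  · intro h S hS hx
    have h2 : (F Sᶜᶜ)ᶜ ⊆ Sᶜ := by
      rw [compl_compl]; exact Set.compl_subset_compl.2 hS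
    exact h Sᶜ h2 hx

/-! ### Complement identities for the predecessor operators -/

variable (G : GameGraph Q)

lemma GameGraph.env_or_sys (q : Q) : q ∈ G.env ∨ q ∈ G.sys := by
  have h : q ∈ G.env ∪ G.sys := G.union_env_sys ▸ Set.mem_univ q
  exact h

lemma GameGraph.compl_Pre1 (P : Set Q) : (G.Pre1 Pᶜ)ᶜ = G.Pre0 P := by
  ext q
  rcases G.env_or_sys q with h | h
  · have h2 : q ∉ G.sys := fun hs => Set.disjoint_left.mp G.disjoint_env_sys h hs
    simp [GameGraph.Pre1, GameGraph.Pre0, h, h2, Set.subset_compl_iff_disjoint_right,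
      Set.not_disjoint_iff_nonempty_inter]
  · have h2 : q ∉ G.env := fun hs => Set.disjoint_left.mp G.disjoint_env_sys hs h
    simp [GameGraph.Pre1, GameGraph.Pre0, h, h2, Set.inter_compl_nonempty_iff]

lemma GameGraph.compl_Pre0 (P : Set Q) : (G.Pre0 Pᶜ)ᶜ = G.Pre1 P := by
  ext q
  rcases G.env_or_sys q with h | h
  · have h2 : q ∉ G.sys := fun hs => Set.disjoint_left.mp G.disjoint_env_sys h hs
    simp [GameGraph.Pre1, GameGraph.Pre0, h, h2, Set.inter_compl_nonempty_iff]
  · have h2 : q ∉ G.env := fun hs => Set.disjoint_left.mp G.disjoint_env_sys hs h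
    simp [GameGraph.Pre1, GameGraph.Pre0, h, h2, Set.subset_compl_iff_disjoint_right,
      Set.not_disjoint_iff_nonempty_inter]

lemma GameGraph.compl_PreE (P : Set Q) : (G.PreE Pᶜ)ᶜ = G.PreA P := by
  ext q
  simp [GameGraph.PreE, GameGraph.PreA, Set.inter_compl_nonempty_iff]

lemma GameGraph.compl_PreA (P : Set Q) : (G.PreA Pᶜ)ᶜ = G.PreE P := by
  ext q
  simp [GameGraph.PreE, GameGraph.PreA, Set.subset_compl_iff_disjoint_right,
    Set.not_disjoint_iff_nonempty_inter]

end Aux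
section Aux2

variable {Q : Type*} (G : GameGraph Q)

lemma GameGraph.PreE_mono {P P' : Set Q} (h : P ⊆ P') : G.PreE P ⊆ G.PreE P' :=
  fun _ ⟨x, hx1, hx2⟩ => ⟨x, hx1, h hx2⟩

lemma GameGraph.PreA_mono {P P' : Set Q} (h : P ⊆ P') : G.PreA P ⊆ G.PreA P' :=
  fun _ hq => hq.trans h

lemma GameGraph.Pre1_mono {P P' : Set Q} (h : P ⊆ P') : G.Pre1 P ⊆ G.Pre1 P' := by
  rintro q (⟨h1, h2⟩ | ⟨h1, h2⟩)
  · exact Or.inl ⟨h1, h2.trans h⟩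
  · exact Or.inr ⟨h1, h2.imp fun x ⟨a, b⟩ => ⟨a, h b⟩⟩

lemma GameGraph.Pre0_mono {P P' : Set Q} (h : P ⊆ P') : G.Pre0 P ⊆ G.Pre0 P' := by
  rintro q (⟨h1, h2⟩ | ⟨h1, h2⟩)
  · exact Or.inl ⟨h1, h2.imp fun x ⟨a, b⟩ => ⟨a, h b⟩⟩
  · exact Or.inr ⟨h1, h2.trans h⟩

lemma GameGraph.Precond_mono {P1 P1' P2 P2' : Set Q} (h1 : P1 ⊆ P1') (h2 : P2 ⊆ P2') :
    G.Precond P1 P2 ⊆ G.Precond P1' P2' :=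
  Set.inter_subset_inter (G.PreE_mono h1) (G.Pre1_mono (Set.union_subset_union h1 h2))

lemma GameGraph.Pre1_subset_PreE (P : Set Q) : G.Pre1 P ⊆ G.PreE P := by
  rintro q (⟨_, h2⟩ | ⟨_, h2⟩)
  · obtain ⟨x, hx⟩ := G.delta_nonempty q
    exact ⟨x, hx, h2 hx⟩
  · exact h2

/-- Pointwise monotonicity of the body of `φ₄`. -/
lemma body_mono {FA FG Z Z' Y Y' X X' W W' : Set Q} (hZ : Z ⊆ Z') (hY : Y ⊆ Y')
    (hX : X ⊆ X') (hW : W ⊆ W') :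
    body G FA FG Z Y X W ⊆ body G FA FG Z' Y' X' W' := by
  apply Set.union_subset_union
  apply Set.union_subset_union
  · exact Set.inter_subset_inter_right _ (G.Pre1_mono hZ)
  · exact G.Pre1_mono hY
  · exact Set.inter_subset_inter_right _
      (G.Precond_mono hW (Set.diff_subset_diff_left hX))

/-- The complement of the body of `φ₄` evaluated at complements is the raw
negated body. -/
lemma compl_body (FA FG Z Y X W : Set Q) :
    (body G FA FG Zᶜ Yᶜ Xᶜ Wᶜ)ᶜ = nbodyRaw G FA FG Z Y X W := by
  have h1 : Wᶜ ∪ (Xᶜ \ FA) = (W ∩ (X ∪ FA))ᶜ := by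
    rw [Set.diff_eq, Set.compl_inter, Set.compl_union]
  unfold body nbodyRaw GameGraph.Precond GameGraph.PrecondC
  simp only [Set.compl_union, Set.compl_inter, compl_compl]
  rw [h1, G.compl_Pre1 Z, G.compl_Pre1 Y, G.compl_PreE W,
    G.compl_Pre1 (W ∩ (X ∪ FA))]

/-- The complement of the simplified negated body evaluated at complements:
the "dual body". -/
lemma compl_nbody (FA FG Z Y X W : Set Q) :
    (nbody G FA FG Zᶜ Yᶜ Xᶜ Wᶜ)ᶜ =
      G.Pre1 Z ∩ (FG ∪ FAᶜ ∪ G.Pre1 Y) ∩ (FG ∪ G.Precond W (X \ FA)) := by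
  have h1 : Wᶜ ∩ (Xᶜ ∪ FA) = (W ∪ (X \ FA))ᶜ := by
    rw [Set.diff_eq, Set.compl_union, Set.compl_inter, compl_compl]
  unfold nbody GameGraph.Precond GameGraph.PrecondC
  simp only [Set.compl_union, Set.compl_inter, compl_compl]
  rw [h1, G.compl_Pre0 Z, G.compl_Pre0 Y, G.compl_PreA W,
    G.compl_Pre0 (W ∪ (X \ FA))]

/-- The raw negated body is pointwise contained in the simplified negated body. -/
lemma nbodyRaw_subset_nbody (FA FG Z Y X W : Set Q) :
    nbodyRaw G FA FG Z Y X W ⊆ nbody G FA FG Z Y X W := by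
  rintro q ⟨⟨hg | hA, hB⟩, ha | hC⟩
  · exact Or.inl (Or.inr ⟨⟨hg, ha⟩, hB⟩)
  · exact Or.inr ⟨hg, hC⟩
  · exact Or.inl (Or.inl hA)
  · exact Or.inl (Or.inl hA)

end Aux2
section Aux3

variable {Q : Type*} (G : GameGraph Q) (FA FG : Set Q)

/-- The dual body: the complement of the simplified negated body at complements. -/
def dbody (Z Y X W : Set Q) : Set Q := (nbody G FA FG Zᶜ Yᶜ Xᶜ Wᶜ)ᶜ

lemma dbody_eq (Z Y X W : Set Q) :
    dbody G FA FG Z Y X W =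
      G.Pre1 Z ∩ (FG ∪ FAᶜ ∪ G.Pre1 Y) ∩ (FG ∪ G.Precond W (X \ FA)) :=
  compl_nbody G FA FG Z Y X W

lemma dbody_mono {Z Z' Y Y' X X' W W' : Set Q} (hZ : Z ⊆ Z') (hY : Y ⊆ Y')
    (hX : X ⊆ X') (hW : W ⊆ W') :
    dbody G FA FG Z Y X W ⊆ dbody G FA FG Z' Y' X' W' := by
  rw [dbody_eq, dbody_eq]
  refine Set.inter_subset_inter (Set.inter_subset_inter (G.Pre1_mono hZ) ?_) ?_
  · exact Set.union_subset_union_right _ (G.Pre1_mono hY)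
  · exact Set.union_subset_union_right _
      (G.Precond_mono hW (Set.diff_subset_diff_left hX))

/-- Pointwise, the dual body is contained in the body of `φ₄`. -/
lemma dbody_subset_body (Z Y X W : Set Q) :
    dbody G FA FG Z Y X W ⊆ body G FA FG Z Y X W := by
  rw [dbody_eq]
  rintro q ⟨⟨hZ, hB⟩, hC⟩
  rcases hC with hg' | hC
  · exact Or.inl (Or.inl ⟨hg', hZ⟩)
  rcases hB with (hg | ha) | hY
  · exact Or.inl (Or.inl ⟨hg, hZ⟩)
  · exact Or.inr ⟨ha, hC⟩
  · exact Or.inl (Or.inr hY)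

/-- The dual inner fixed points. -/
def innerWd (Z Y X : Set Q) : Set Q := lfpSet (fun W => dbody G FA FG Z Y X W)

def innerXd (Z Y : Set Q) : Set Q := gfpSet (fun X => innerWd G FA FG Z Y X)

def innerYd (Z : Set Q) : Set Q := lfpSet (fun Y => innerXd G FA FG Z Y)

/- Monotonicity of the nested fixed points in their parameters. -/

lemma innerW_mono {Z Z' Y Y' X X' : Set Q} (hZ : Z ⊆ Z') (hY : Y ⊆ Y') (hX : X ⊆ X') :
    innerW G FA FG Z Y X ⊆ innerW G FA FG Z' Y' X' :=
  lfpSet_mono fun _ => body_mono G hZ hY hX subset_rfl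

lemma innerX_mono {Z Z' Y Y' : Set Q} (hZ : Z ⊆ Z') (hY : Y ⊆ Y') :
    innerX G FA FG Z Y ⊆ innerX G FA FG Z' Y' :=
  gfpSet_mono fun _ => innerW_mono G FA FG hZ hY subset_rfl

lemma innerY_mono {Z Z' : Set Q} (hZ : Z ⊆ Z') :
    innerY G FA FG Z ⊆ innerY G FA FG Z' :=
  lfpSet_mono fun _ => innerX_mono G FA FG hZ subset_rfl

lemma innerWd_mono {Z Z' Y Y' X X' : Set Q} (hZ : Z ⊆ Z') (hY : Y ⊆ Y') (hX : X ⊆ X') :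
    innerWd G FA FG Z Y X ⊆ innerWd G FA FG Z' Y' X' :=
  lfpSet_mono fun _ => dbody_mono G FA FG hZ hY hX subset_rfl

lemma innerXd_mono {Z Z' Y Y' : Set Q} (hZ : Z ⊆ Z') (hY : Y ⊆ Y') :
    innerXd G FA FG Z Y ⊆ innerXd G FA FG Z' Y' :=
  gfpSet_mono fun _ => innerWd_mono G FA FG hZ hY subset_rfl

/- The dual nested fixed points are below the primal ones. -/

lemma innerWd_subset_innerW (Z Y X : Set Q) :
    innerWd G FA FG Z Y X ⊆ innerW G FA FG Z Y X :=
  lfpSet_mono fun W => dbody_subset_body G FA FG Z Y X W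

lemma innerXd_subset_innerX (Z Y : Set Q) :
    innerXd G FA FG Z Y ⊆ innerX G FA FG Z Y :=
  gfpSet_mono fun X => innerWd_subset_innerW G FA FG Z Y X

/-- `φ₄` is a fixed point of `innerY`. -/
lemma phi4_fixed : phi4 G FA FG = innerY G FA FG (phi4 G FA FG) :=
  gfpSet_fixed fun _ _ h => innerY_mono G FA FG h

/-- The key inclusion used in the coinductive argument. -/
lemma body_subset_dbody {Z Y X W : Set Q} (hYZ : Y ⊆ Z) (hYW : Y ⊆ W)
    (hWX : W ⊆ X) (hXZ : X ⊆ Z) :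
    body G FA FG Z Y X W ⊆ dbody G FA FG Z Y X W := by
  rw [dbody_eq]
  rintro q ((⟨hg, hZ⟩ | hY) | ⟨ha, hC⟩)
  · exact ⟨⟨hZ, Or.inl (Or.inl hg)⟩, Or.inl hg⟩
  · refine ⟨⟨G.Pre1_mono hYZ hY, Or.inr hY⟩, Or.inr ⟨?_, ?_⟩⟩
    · exact G.PreE_mono hYW (G.Pre1_subset_PreE Y hY)
    · exact G.Pre1_mono (hYW.trans Set.subset_union_left) hY
  · refine ⟨⟨?_, Or.inl (Or.inr ha)⟩, Or.inr hC⟩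
    have h1 : W ∪ (X \ FA) ⊆ Z :=
      Set.union_subset (hWX.trans hXZ) (Set.diff_subset.trans hXZ)
    exact G.Pre1_mono h1 hC.2

/-- `φ₄ ⊆ νZ.μY.νX.μW. dbody`, the heart of the negation argument. -/
lemma phi4_subset_dual :
    phi4 G FA FG ⊆ gfpSet (fun Z => innerYd G FA FG Z) := by
  set Z0 := phi4 G FA FG with hZ0
  set T := innerYd G FA FG Z0 with hT
  -- it suffices to show Z0 ⊆ T
  suffices hZT : Z0 ⊆ T from le_gfpSet hZT
  have hfix : Z0 = innerY G FA FG Z0 := phi4_fixed G FA FG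
  have monoIXd : Monotone (fun Y => innerXd G FA FG Z0 Y) :=
    fun _ _ h => innerXd_mono G FA FG subset_rfl h
  have monoIX : Monotone (fun Y => innerX G FA FG Z0 Y) :=
    fun _ _ h => innerX_mono G FA FG subset_rfl h
  have hTfix : innerXd G FA FG Z0 T = T := lfpSet_fixed monoIXd
  -- T ⊆ Z0
  have hTZ : T ⊆ Z0 := by
    have h1 : innerYd G FA FG Z0 ⊆ innerY G FA FG Z0 :=
      lfpSet_mono fun Y => innerXd_subset_innerX G FA FG Z0 Y
    rw [hT]
    exact h1.trans hfix.ge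
  -- innerX Z0 Z0 = Z0
  have hXZZ : innerX G FA FG Z0 Z0 = Z0 := by
    have h1 : innerX G FA FG Z0 (innerY G FA FG Z0) = innerY G FA FG Z0 :=
      lfpSet_fixed monoIX
    calc innerX G FA FG Z0 Z0
        = innerX G FA FG Z0 (innerY G FA FG Z0) := by rw [← hfix]
      _ = innerY G FA FG Z0 := h1
      _ = Z0 := hfix.symm
  set U := innerX G FA FG Z0 T with hU
  have hUfix : U = innerW G FA FG Z0 T U :=
    gfpSet_fixed fun _ _ h => innerW_mono G FA FG subset_rfl subset_rfl h
  have hTU : T ⊆ U := by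
    rw [← hTfix]; exact innerXd_subset_innerX G FA FG Z0 T
  have hUZ : U ⊆ Z0 := by
    rw [hU]
    exact (innerX_mono G FA FG subset_rfl hTZ).trans hXZZ.le
  set V := innerWd G FA FG Z0 T U with hV
  have hVfix : dbody G FA FG Z0 T U V = V :=
    lfpSet_fixed fun _ _ h => dbody_mono G FA FG subset_rfl subset_rfl subset_rfl h
  have hTV : T ⊆ V := by
    have hgf : innerXd G FA FG Z0 T =
        innerWd G FA FG Z0 T (innerXd G FA FG Z0 T) :=
      gfpSet_fixed fun _ _ h => innerWd_mono G FA FG subset_rfl subset_rfl h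
    have h1 : T = innerWd G FA FG Z0 T T := by
      conv_lhs => rw [← hTfix]
      rw [hgf, hTfix]
    rw [h1, hV]
    exact innerWd_mono G FA FG subset_rfl subset_rfl hTU
  have hVU : V ⊆ U := by
    rw [hV]
    exact (innerWd_subset_innerW G FA FG Z0 T U).trans hUfix.ge
  -- the coinductive step
  have hUV : U ⊆ V := by
    have h1 : body G FA FG Z0 T U V ⊆ V :=
      (body_subset_dbody G FA FG hTZ hTV hVU hUZ).trans hVfix.le
    calc U = innerW G FA FG Z0 T U := hUfix
      _ ⊆ V := lfpSet_le h1
  have hUT : U ⊆ T := by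
    have h1 : U ⊆ innerXd G FA FG Z0 T := le_gfpSet hUV
    rwa [hTfix] at h1
  -- conclude by induction (lfp)
  have h2 : innerX G FA FG Z0 T ⊆ T := hUT
  calc Z0 = innerY G FA FG Z0 := hfix
    _ ⊆ T := lfpSet_le h2

end Aux3
section Aux4

variable {Q : Type*} (G : GameGraph Q) (FA FG : Set Q)

/-- Complement duality: `⟦φ₄⟧ᶜ` is exactly the raw negated fixed point. -/
lemma compl_phi4 : (phi4 G FA FG)ᶜ = phi4negRaw G FA FG := by
  unfold phi4 phi4negRaw innerY innerX innerW
  rw [compl_gfpSet]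
  apply lfpSet_congr; intro Z
  rw [compl_lfpSet]
  apply gfpSet_congr; intro Y
  rw [compl_gfpSet]
  apply lfpSet_congr; intro X
  rw [compl_lfpSet]
  apply gfpSet_congr; intro W
  rw [compl_body]

/-- Complement duality for the simplified negated fixed point. -/
lemma compl_phi4neg :
    (phi4neg G FA FG)ᶜ = gfpSet (fun Z => innerYd G FA FG Z) := by
  unfold phi4neg innerYd innerXd innerWd
  rw [compl_lfpSet]
  apply gfpSet_congr; intro Z
  rw [compl_gfpSet]
  apply lfpSet_congr; intro Y
  rw [compl_lfpSet]
  apply gfpSet_congr; intro X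
  rw [compl_gfpSet]
  apply lfpSet_congr; intro W
  rfl

/-- The raw negated fixed point is contained in the simplified one. -/
lemma phi4negRaw_subset_phi4neg : phi4negRaw G FA FG ⊆ phi4neg G FA FG := by
  unfold phi4negRaw phi4neg
  exact lfpSet_mono fun Z => gfpSet_mono fun Y => lfpSet_mono fun X =>
    gfpSet_mono fun W => nbodyRaw_subset_nbody G FA FG Z Y X W

end Aux4
/-- the complement of `⟦φ₄⟧` equals the value of the simplified
negated fixed point `μZ̄.νȲ.μX̄.νW̄. Pre⁰(Z̄) ∪ ((Q∖F_G) ∩ F_A ∩ Pre⁰(Ȳ)) ∪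
((Q∖F_G) ∩ Precondᶜ(W̄, X̄ ∪ F_A))`, and the unsimplified negation
`μZ̄.νȲ.μX̄.νW̄. ((Q∖F_G) ∪ Pre⁰(Z̄)) ∩ Pre⁰(Ȳ) ∩ (F_A ∪ Precondᶜ(W̄, X̄ ∪ F_A))`
simplifies to the same value. -/
theorem negation_simplifies {Q : Type*} [Fintype Q] (G : GameGraph Q)
    (FA FG : Set Q) :
    (phi4 G FA FG)ᶜ = phi4neg G FA FG ∧
      phi4negRaw G FA FG = phi4neg G FA FG := by
  have h1 : (phi4 G FA FG)ᶜ = phi4negRaw G FA FG := compl_phi4 G FA FG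
  have h2 : phi4negRaw G FA FG ⊆ phi4neg G FA FG :=
    phi4negRaw_subset_phi4neg G FA FG
  have h3 : phi4neg G FA FG ⊆ (phi4 G FA FG)ᶜ := by
    rw [Set.subset_compl_comm, compl_phi4neg]
    exact phi4_subset_dual G FA FG
  have hmain : (phi4 G FA FG)ᶜ = phi4neg G FA FG :=
    subset_antisymm (h1 ▸ h2) h3
  exact ⟨hmain, h1 ▸ hmain⟩

end GR1
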